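/- arXiv:1904.09653 — 8 statements merged into one kernel-verified Lean document; each statement's English description precedes it below -/
import Mathlib

section
/- For every x ∈ X, the value Φ x is the greatest element (IsGreatest) of the set { Ψ x μ : μ ∈ (Fin N → Fin m → ℂ) }; in particular the maximum over μ is attained at μ n = (B n x)⁻¹ *ᵥ (a n x) and equals Φ x. -/
open Matrix ComplexConjugate
open scoped ComplexOrder

/-! Completing the square: for `B` positive definite,
`aᴴ B⁻¹ a - (2 Re(μᴴ a) - μᴴ B μ) = (μ - B⁻¹ a)ᴴ B (μ - B⁻¹ a) ≥ 0`, with equality at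
`μ = B⁻¹ a`. Each summand of `Ψ` is therefore bounded by the corresponding summand of `Φ`
through the monotone `f n`, and all bounds are attained simultaneously at `μ n = (B n x)⁻¹ a n x`. -/

section QuadraticTransform

variable {n 𝕜 : Type*} [Fintype n] [RCLike 𝕜]

open RCLike

lemma re_star_dotProduct_comm (u v : n → 𝕜) : re (star u ⬝ᵥ v) = re (star v ⬝ᵥ u) := by
  rw [← conj_re, ← star_def, star_dotProduct, star_star]

lemma Matrix.IsHermitian.re_star_dotProduct_mulVec_comm {B : Matrix n n 𝕜}
    (hB : B.IsHermitian) (u v : n → 𝕜) :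
    re (star u ⬝ᵥ (B *ᵥ v)) = re (star v ⬝ᵥ (B *ᵥ u)) := by
  rw [re_star_dotProduct_comm, star_mulVec, hB.eq, dotProduct_mulVec]

noncomputable def quadraticTransform (B : Matrix n n 𝕜) (a μ : n → 𝕜) : ℝ :=
  2 * re (star μ ⬝ᵥ a) - re (star μ ⬝ᵥ (B *ᵥ μ))

variable [DecidableEq n] {B : Matrix n n 𝕜}

lemma Matrix.PosDef.mulVec_inv_mulVec (hB : B.PosDef) (a : n → 𝕜) : B *ᵥ (B⁻¹ *ᵥ a) = a := by
  rw [mulVec_mulVec, mul_nonsing_inv _ (isUnit_iff_isUnit_det B |>.mp hB.isUnit), one_mulVec]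

lemma Matrix.PosDef.re_star_dotProduct_mulVec_sub_inv_mulVec (hB : B.PosDef) (a μ : n → 𝕜) :
    re (star (μ - B⁻¹ *ᵥ a) ⬝ᵥ (B *ᵥ (μ - B⁻¹ *ᵥ a)))
      = re (star a ⬝ᵥ (B⁻¹ *ᵥ a)) - quadraticTransform B a μ := by
  have hcross : re (star (B⁻¹ *ᵥ a) ⬝ᵥ (B *ᵥ μ)) = re (star μ ⬝ᵥ a) := by
    rw [hB.isHermitian.re_star_dotProduct_mulVec_comm, hB.mulVec_inv_mulVec]
  rw [quadraticTransform, star_sub, mulVec_sub, sub_dotProduct, dotProduct_sub, dotProduct_sub,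
    hB.mulVec_inv_mulVec]
  simp only [map_sub]
  rw [hcross, re_star_dotProduct_comm (B⁻¹ *ᵥ a) a]
  ring

lemma Matrix.PosDef.quadraticTransform_le (hB : B.PosDef) (a μ : n → 𝕜) :
    quadraticTransform B a μ ≤ re (star a ⬝ᵥ (B⁻¹ *ᵥ a)) := by
  have hsq := hB.posSemidef.re_dotProduct_nonneg (μ - B⁻¹ *ᵥ a)
  rw [hB.re_star_dotProduct_mulVec_sub_inv_mulVec] at hsq
  linarith

lemma Matrix.PosDef.quadraticTransform_inv_mulVec (hB : B.PosDef) (a : n → 𝕜) :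
    quadraticTransform B a (B⁻¹ *ᵥ a) = re (star a ⬝ᵥ (B⁻¹ *ᵥ a)) := by
  rw [quadraticTransform, hB.mulVec_inv_mulVec, re_star_dotProduct_comm (B⁻¹ *ᵥ a) a]
  ring

end QuadraticTransform

lemma isGreatest_range_sum_comp_of_le_of_eq {ι β : Type*} [Fintype ι] {f : ι → ℝ → ℝ}
    (hf : ∀ i, Monotone (f i)) {g : ι → β → ℝ} {c : ι → ℝ} {b : ι → β}
    (hle : ∀ i y, g i y ≤ c i) (heq : ∀ i, g i (b i) = c i) :
    IsGreatest (Set.range fun y : ι → β => ∑ i, f i (g i (y i))) (∑ i, f i (c i)) := by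
  refine ⟨⟨b, by simp only [heq]⟩, ?_⟩
  rintro _ ⟨y, rfl⟩
  exact Finset.sum_le_sum fun i _ => hf i (hle i (y i))

theorem quadratic_transform_isGreatest_general (m N : ℕ)
    {α : Type*} (X : Set α)
    (a : Fin N → α → (Fin m → ℂ))
    (B : Fin N → α → Matrix (Fin m) (Fin m) ℂ)
    (hB : ∀ x ∈ X, ∀ n : Fin N, (B n x).IsHermitian ∧ (B n x).PosDef)
    (f : Fin N → ℝ → ℝ) (hf : ∀ n : Fin N, Monotone (f n))
    (Φ : α → ℝ)
    (hΦ : ∀ x : α, Φ x = ∑ n : Fin N,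
      f n ((star (a n x) ⬝ᵥ ((B n x)⁻¹ *ᵥ (a n x))).re))
    (Ψ : α → (Fin N → Fin m → ℂ) → ℝ)
    (hΨ : ∀ (x : α) (μ : Fin N → Fin m → ℂ), Ψ x μ = ∑ n : Fin N,
      f n (2 * (star (μ n) ⬝ᵥ (a n x)).re - (star (μ n) ⬝ᵥ ((B n x) *ᵥ (μ n))).re))
    (x : α) (hx : x ∈ X) :
    IsGreatest {y : ℝ | ∃ μ : Fin N → Fin m → ℂ, y = Ψ x μ} (Φ x) ∧
    Ψ x (fun n => (B n x)⁻¹ *ᵥ (a n x)) = Φ x := by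
  have hpd n := (hB x hx n).2
  have hΨx : Ψ x = fun μ => ∑ n, f n (quadraticTransform (B n x) (a n x) (μ n)) :=
    funext (hΨ x)
  have hΦx : Φ x = ∑ n, f n (RCLike.re (star (a n x) ⬝ᵥ ((B n x)⁻¹ *ᵥ a n x))) := hΦ x
  have hmax := isGreatest_range_sum_comp_of_le_of_eq hf
    (fun n => (hpd n).quadraticTransform_le (a n x))
    (fun n => (hpd n).quadraticTransform_inv_mulVec (a n x))
  rw [← hΨx, ← hΦx] at hmax
  refine ⟨by simpa only [Set.range, eq_comm] using hmax, ?_⟩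
  simp only [hΨx, hΦx, (hpd _).quadraticTransform_inv_mulVec]

/-- Quadratic transform: for every `x ∈ X`, the original sum-of-functions-of-ratio
objective `Φ x` is the greatest element of the set of values of the reformulated
objective `Ψ x μ` over all auxiliary variables `μ`; the maximum is attained at
`μ n = (B n x)⁻¹ *ᵥ (a n x)` and equals `Φ x`. -/
theorem quadratic_transform_isGreatest (m N : ℕ) (hm : 0 < m) (hN : 0 < N)
    {α : Type*} (X : Set α) (hX : X.Nonempty)
    (a : Fin N → α → (Fin m → ℂ))
    (B : Fin N → α → Matrix (Fin m) (Fin m) ℂ)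
    (hB : ∀ x ∈ X, ∀ n : Fin N, (B n x).IsHermitian ∧ (B n x).PosDef)
    (f : Fin N → ℝ → ℝ) (hf : ∀ n : Fin N, Monotone (f n))
    (Φ : α → ℝ)
    (hΦ : ∀ x : α, Φ x = ∑ n : Fin N,
      f n ((star (a n x) ⬝ᵥ ((B n x)⁻¹ *ᵥ (a n x))).re))
    (Ψ : α → (Fin N → Fin m → ℂ) → ℝ)
    (hΨ : ∀ (x : α) (μ : Fin N → Fin m → ℂ), Ψ x μ = ∑ n : Fin N,
      f n (2 * (star (μ n) ⬝ᵥ (a n x)).re - (star (μ n) ⬝ᵥ ((B n x) *ᵥ (μ n))).re))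
    (x : α) (hx : x ∈ X) :
    IsGreatest {y : ℝ | ∃ μ : Fin N → Fin m → ℂ, y = Ψ x μ} (Φ x) ∧
    Ψ x (fun n => (B n x)⁻¹ *ᵥ (a n x)) = Φ x :=
  quadratic_transform_isGreatest_general m N X a B hB f hf Φ hΦ Ψ hΨ x hx
end

section
/- A point x* ∈ X is a global maximizer of Φ over X (i.e. Φ x ≤ Φ x* for all x ∈ X) if and only if the pair (x*, μ*), where μ* n = (B n x*)⁻¹ *ᵥ (a n x*), is a global maximizer of Ψ over X × (Fin N → Fin m → ℂ) (i.e. Ψ x μ ≤ Ψ x* μ* for all x ∈ X and all μ). -/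
/-!
Completing the square: with `ν = B⁻¹ a`, the gap `a* B⁻¹ a - (2 Re μ* a - μ* B μ)` equals
`(μ - ν)* B (μ - ν)`, which is nonnegative for positive definite `B` and vanishes at `μ = ν`.
So `Φ x = max_μ Ψ x μ`, attained at `μ = B⁻¹ a`, and the two maximization problems share
their maximizers because `f n` is monotone.
-/

open Matrix
open scoped ComplexOrder

theorem forall_le_iff_of_le_of_eq {α β γ : Type*} [Preorder γ] {X : Set α}
    {Φ : α → γ} {Ψ : α → β → γ} {g : α → β}
    (hle : ∀ x ∈ X, ∀ y, Ψ x y ≤ Φ x) (heq : ∀ x ∈ X, Ψ x (g x) = Φ x)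
    {x₀ : α} (hx₀ : x₀ ∈ X) :
    (∀ x ∈ X, Φ x ≤ Φ x₀) ↔ ∀ x ∈ X, ∀ y, Ψ x y ≤ Ψ x₀ (g x₀) := by
  rw [heq x₀ hx₀]
  constructor
  · exact fun h x hx y => (hle x hx y).trans (h x hx)
  · exact fun h x hx => heq x hx ▸ h x hx (g x)

namespace Matrix

variable {ι : Type*} [Fintype ι]

theorem re_star_dotProduct_comm (v w : ι → ℂ) :
    (star v ⬝ᵥ w).re = (star w ⬝ᵥ v).re := by
  rw [← Complex.conj_re, ← Complex.star_def, star_dotProduct, star_star]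

theorem IsHermitian.re_sub_quadratic_transform {B : Matrix ι ι ℂ} (hB : B.IsHermitian)
    {a ν : ι → ℂ} (hν : B *ᵥ ν = a) (μ : ι → ℂ) :
    (star a ⬝ᵥ ν).re - (2 * (star μ ⬝ᵥ a).re - (star μ ⬝ᵥ (B *ᵥ μ)).re)
      = (star (μ - ν) ⬝ᵥ (B *ᵥ (μ - ν))).re := by
  have hνBμ : star ν ⬝ᵥ (B *ᵥ μ) = star a ⬝ᵥ μ := by
    rw [dotProduct_mulVec, ← hB.eq, ← star_mulVec, hν]
  rw [star_sub, sub_dotProduct, mulVec_sub, dotProduct_sub, dotProduct_sub, hν, hνBμ]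
  simp only [Complex.sub_re]
  rw [re_star_dotProduct_comm a μ, re_star_dotProduct_comm a ν]
  ring

variable [DecidableEq ι]

theorem PosDef.mulVec_inv_mulVec_s2 {B : Matrix ι ι ℂ} (hB : B.PosDef) (a : ι → ℂ) :
    B *ᵥ (B⁻¹ *ᵥ a) = a := by
  rw [mulVec_mulVec, mul_nonsing_inv B (B.isUnit_iff_isUnit_det.mp hB.isUnit), one_mulVec]

theorem PosDef.quadratic_transform_le {B : Matrix ι ι ℂ} (hB : B.PosDef) (a μ : ι → ℂ) :
    2 * (star μ ⬝ᵥ a).re - (star μ ⬝ᵥ (B *ᵥ μ)).re ≤ (star a ⬝ᵥ (B⁻¹ *ᵥ a)).re := by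
  have hgap := hB.isHermitian.re_sub_quadratic_transform (hB.mulVec_inv_mulVec_s2 a) μ
  have hnonneg : 0 ≤ (star (μ - B⁻¹ *ᵥ a) ⬝ᵥ (B *ᵥ (μ - B⁻¹ *ᵥ a))).re :=
    hB.posSemidef.re_dotProduct_nonneg _
  linarith

theorem PosDef.quadratic_transform_inv_mulVec {B : Matrix ι ι ℂ} (hB : B.PosDef)
    (a : ι → ℂ) :
    2 * (star (B⁻¹ *ᵥ a) ⬝ᵥ a).re - (star (B⁻¹ *ᵥ a) ⬝ᵥ (B *ᵥ (B⁻¹ *ᵥ a))).re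
      = (star a ⬝ᵥ (B⁻¹ *ᵥ a)).re := by
  have hgap := hB.isHermitian.re_sub_quadratic_transform (hB.mulVec_inv_mulVec_s2 a) (B⁻¹ *ᵥ a)
  rw [sub_self, mulVec_zero, dotProduct_zero, Complex.zero_re] at hgap
  linarith

end Matrix

theorem quadratic_transform_global_maximizer_general (m N : ℕ)
    {α : Type*} (X : Set α)
    (a : Fin N → α → (Fin m → ℂ))
    (B : Fin N → α → Matrix (Fin m) (Fin m) ℂ)
    (hB : ∀ x ∈ X, ∀ n : Fin N, (B n x).IsHermitian ∧ (B n x).PosDef)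
    (f : Fin N → ℝ → ℝ) (hf : ∀ n : Fin N, Monotone (f n))
    (Φ : α → ℝ)
    (hΦ : ∀ x : α, Φ x = ∑ n : Fin N,
      f n ((star (a n x) ⬝ᵥ ((B n x)⁻¹ *ᵥ (a n x))).re))
    (Ψ : α → (Fin N → Fin m → ℂ) → ℝ)
    (hΨ : ∀ (x : α) (μ : Fin N → Fin m → ℂ), Ψ x μ = ∑ n : Fin N,
      f n (2 * (star (μ n) ⬝ᵥ (a n x)).re - (star (μ n) ⬝ᵥ ((B n x) *ᵥ (μ n))).re))
    (xstar : α) (hxstar : xstar ∈ X) :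
    (∀ x ∈ X, Φ x ≤ Φ xstar) ↔
    (∀ x ∈ X, ∀ μ : Fin N → Fin m → ℂ,
      Ψ x μ ≤ Ψ xstar (fun n => (B n xstar)⁻¹ *ᵥ (a n xstar))) := by
  refine forall_le_iff_of_le_of_eq (g := fun x n => (B n x)⁻¹ *ᵥ a n x)
    (fun x hx μ => ?_) (fun x hx => ?_) hxstar
  · rw [hΨ, hΦ]
    exact Finset.sum_le_sum fun n _ => hf n ((hB x hx n).2.quadratic_transform_le _ _)
  · rw [hΨ, hΦ]
    exact Finset.sum_congr rfl fun n _ => by rw [(hB x hx n).2.quadratic_transform_inv_mulVec]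

/-- Equivalence of global maximizers under the quadratic transform:
`x*` globally maximizes `Φ` over `X` iff the pair `(x*, μ*)`, where
`μ* n = (B n x*)⁻¹ *ᵥ (a n x*)`, globally maximizes `Ψ` over
`X × (Fin N → Fin m → ℂ)`. -/
theorem quadratic_transform_global_maximizer (m N : ℕ) (hm : 0 < m) (hN : 0 < N)
    {α : Type*} (X : Set α) (hX : X.Nonempty)
    (a : Fin N → α → (Fin m → ℂ))
    (B : Fin N → α → Matrix (Fin m) (Fin m) ℂ)
    (hB : ∀ x ∈ X, ∀ n : Fin N, (B n x).IsHermitian ∧ (B n x).PosDef)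
    (f : Fin N → ℝ → ℝ) (hf : ∀ n : Fin N, Monotone (f n))
    (Φ : α → ℝ)
    (hΦ : ∀ x : α, Φ x = ∑ n : Fin N,
      f n ((star (a n x) ⬝ᵥ ((B n x)⁻¹ *ᵥ (a n x))).re))
    (Ψ : α → (Fin N → Fin m → ℂ) → ℝ)
    (hΨ : ∀ (x : α) (μ : Fin N → Fin m → ℂ), Ψ x μ = ∑ n : Fin N,
      f n (2 * (star (μ n) ⬝ᵥ (a n x)).re - (star (μ n) ⬝ᵥ ((B n x) *ᵥ (μ n))).re))
    (xstar : α) (hxstar : xstar ∈ X) :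
    (∀ x ∈ X, Φ x ≤ Φ xstar) ↔
    (∀ x ∈ X, ∀ μ : Fin N → Fin m → ℂ,
      Ψ x μ ≤ Ψ xstar (fun n => (B n xstar)⁻¹ *ᵥ (a n xstar))) :=
  quadratic_transform_global_maximizer_general m N X a B hB f hf Φ hΦ Ψ hΨ xstar hxstar
end

section
/- Let m1, m2 be positive naturals, let B be an m1×m1 complex Hermitian positive definite matrix, and let A be an m1×m2 complex matrix. Then for every m1×m2 complex matrix Λ, the m2×m2 matrix Aᴴ * B⁻¹ * A − (Aᴴ * Λ + Λᴴ * A − Λᴴ * B * Λ) is positive semidefinite, and it equals the zero matrix if and only if Λ = B⁻¹ * A. -/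
/-! Completing the square, the defect `Aᴴ B⁻¹ A − (Aᴴ Λ + Λᴴ A − Λᴴ B Λ)` equals `Dᴴ B D` with
`D = Λ − B⁻¹ A`. A congruence of a positive definite matrix is positive semidefinite, and
`Dᴴ B D = 0` forces `D x = 0` for every `x`, since `star x ⬝ᵥ Dᴴ B D x = star (D x) ⬝ᵥ B (D x)`. -/

open Matrix
open scoped ComplexOrder

namespace Matrix

variable {m n R : Type*} [Fintype n]

lemma IsHermitian.conjTranspose_mul_inv_mul_sub_eq [CommRing R] [StarRing R] [DecidableEq n]
    {B : Matrix n n R} (hB : B.IsHermitian) (hdet : IsUnit B.det) (A Λ : Matrix n m R) :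
    Aᴴ * B⁻¹ * A - (Aᴴ * Λ + Λᴴ * A - Λᴴ * B * Λ) = (Λ - B⁻¹ * A)ᴴ * B * (Λ - B⁻¹ * A) := by
  have hBinv : B⁻¹ᴴ = B⁻¹ := by rw [conjTranspose_nonsing_inv, hB.eq]
  simp only [conjTranspose_sub, conjTranspose_mul, hBinv, Matrix.sub_mul, Matrix.mul_sub,
    Matrix.mul_assoc, mul_nonsing_inv_cancel_left _ _ hdet, nonsing_inv_mul_cancel_left _ _ hdet]
  abel

lemma PosDef.conjTranspose_mul_mul_same_eq_zero_iff [Fintype m] [Ring R] [PartialOrder R]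
    [StarRing R] {B : Matrix n n R} (hB : B.PosDef) {D : Matrix n m R} :
    Dᴴ * B * D = 0 ↔ D = 0 := by
  refine ⟨fun h ↦ ext_iff_mulVec.mpr fun x ↦ ?_, fun h ↦ by simp [h]⟩
  by_contra hx
  have hquad : star (D *ᵥ x) ⬝ᵥ (B *ᵥ (D *ᵥ x)) = star x ⬝ᵥ ((Dᴴ * B * D) *ᵥ x) := by
    simp only [star_mulVec, dotProduct_mulVec, vecMul_vecMul, ← mulVec_mulVec]
  have hpos := hB.dotProduct_mulVec_pos (x := D *ᵥ x) (by simpa using hx)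
  rw [hquad, h, zero_mulVec, dotProduct_zero] at hpos
  exact hpos.false

end Matrix

theorem matrix_quadratic_completion_general (m1 m2 : ℕ)
    (B : Matrix (Fin m1) (Fin m1) ℂ) (hB : B.PosDef)
    (A : Matrix (Fin m1) (Fin m2) ℂ) (Λ : Matrix (Fin m1) (Fin m2) ℂ) :
    (Aᴴ * B⁻¹ * A - (Aᴴ * Λ + Λᴴ * A - Λᴴ * B * Λ)).PosSemidef ∧
    (Aᴴ * B⁻¹ * A - (Aᴴ * Λ + Λᴴ * A - Λᴴ * B * Λ) = 0 ↔ Λ = B⁻¹ * A) := by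
  rw [hB.isHermitian.conjTranspose_mul_inv_mul_sub_eq ((isUnit_iff_isUnit_det B).mp hB.isUnit),
    hB.conjTranspose_mul_mul_same_eq_zero_iff, sub_eq_zero]
  exact ⟨hB.posSemidef.conjTranspose_mul_mul_same _, Iff.rfl⟩

/-- Matrix quadratic-completion: for an `m1 × m1` Hermitian positive definite `B`
and an `m1 × m2` matrix `A`, for every `m1 × m2` matrix `Λ`, the `m2 × m2` matrix
`Aᴴ B⁻¹ A − (Aᴴ Λ + Λᴴ A − Λᴴ B Λ)` is positive semidefinite, and it is zero iff
`Λ = B⁻¹ A`. -/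
theorem matrix_quadratic_completion (m1 m2 : ℕ) (hm1 : 0 < m1) (hm2 : 0 < m2)
    (B : Matrix (Fin m1) (Fin m1) ℂ) (hB : B.PosDef)
    (A : Matrix (Fin m1) (Fin m2) ℂ) (Λ : Matrix (Fin m1) (Fin m2) ℂ) :
    (Aᴴ * B⁻¹ * A - (Aᴴ * Λ + Λᴴ * A - Λᴴ * B * Λ)).PosSemidef ∧
    (Aᴴ * B⁻¹ * A - (Aᴴ * Λ + Λᴴ * A - Λᴴ * B * Λ) = 0 ↔ Λ = B⁻¹ * A) :=
  matrix_quadratic_completion_general m1 m2 B hB A Λ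
end

section
/- For every x ∈ X, the value Φ x is the greatest element (IsGreatest) of the set { Ψ x Λ : Λ ∈ (Fin N → Matrix (Fin m1) (Fin m2) ℂ) }; in particular the maximum over Λ is attained at Λ n = (B n x)⁻¹ * (A n x) and equals Φ x. -/
/-!
Completing the square: for `B` positive definite,
`Aᴴ B⁻¹ A - (Aᴴ Λ + Λᴴ A - Λᴴ B Λ) = (Λ - B⁻¹ A)ᴴ B (Λ - B⁻¹ A)`, which is positive semidefinite
and vanishes at `Λ = B⁻¹ A`. Since each `F n` is Loewner-monotone, every summand of `Ψ x Λ` is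
bounded by the corresponding summand of `Φ x`, with equality at `Λ n = (B n x)⁻¹ * A n x`.
-/

namespace Matrix

variable {m n R : Type*} [Fintype m] [DecidableEq m]

section CommRing

variable [CommRing R] [StarRing R]

def quadTransform (A : Matrix m n R) (B : Matrix m m R) (Λ : Matrix m n R) : Matrix n n R :=
  Aᴴ * Λ + Λᴴ * A - Λᴴ * B * Λ

theorem quadTransform_eq_sub {B : Matrix m m R} (hBh : B.IsHermitian) (hB : IsUnit B.det)
    (A Λ : Matrix m n R) :
    quadTransform A B Λ = Aᴴ * B⁻¹ * A - (Λ - B⁻¹ * A)ᴴ * B * (Λ - B⁻¹ * A) := by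
  have hAh : (B⁻¹ * A)ᴴ = Aᴴ * B⁻¹ := by
    rw [conjTranspose_mul, hBh.inv.eq]
  rw [quadTransform, conjTranspose_sub, hAh]
  simp only [Matrix.sub_mul, Matrix.mul_sub, Matrix.mul_assoc,
    mul_nonsing_inv_cancel_left _ _ hB, nonsing_inv_mul_cancel_left _ _ hB]
  abel

theorem quadTransform_inv_mul {B : Matrix m m R} (hBh : B.IsHermitian) (hB : IsUnit B.det)
    (A : Matrix m n R) : quadTransform A B (B⁻¹ * A) = Aᴴ * B⁻¹ * A := by
  simp [quadTransform_eq_sub hBh hB]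

end CommRing

theorem PosDef.posSemidef_sub_quadTransform [Fintype n] {K : Type*} [Field K] [PartialOrder K]
    [StarRing K] {B : Matrix m m K} (hB : B.PosDef) (A Λ : Matrix m n K) :
    (Aᴴ * B⁻¹ * A - quadTransform A B Λ).PosSemidef := by
  rw [quadTransform_eq_sub hB.isHermitian ((isUnit_iff_isUnit_det B).1 hB.isUnit),
    sub_sub_cancel]
  exact hB.posSemidef.conjTranspose_mul_mul_same _

end Matrix

open Matrix
open scoped ComplexOrder

theorem matrix_quadratic_transform_isGreatest_general (m1 m2 N : ℕ)
    {α : Type*} (X : Set α)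
    (A : Fin N → α → Matrix (Fin m1) (Fin m2) ℂ)
    (B : Fin N → α → Matrix (Fin m1) (Fin m1) ℂ)
    (hB : ∀ x ∈ X, ∀ n : Fin N, (B n x).IsHermitian ∧ (B n x).PosDef)
    (F : Fin N → Matrix (Fin m2) (Fin m2) ℂ → ℝ)
    (hF : ∀ n : Fin N, ∀ C C' : Matrix (Fin m2) (Fin m2) ℂ,
      (C - C').PosSemidef → F n C' ≤ F n C)
    (Φ : α → ℝ)
    (hΦ : ∀ x : α, Φ x = ∑ n : Fin N, F n ((A n x)ᴴ * (B n x)⁻¹ * (A n x)))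
    (Ψ : α → (Fin N → Matrix (Fin m1) (Fin m2) ℂ) → ℝ)
    (hΨ : ∀ (x : α) (Λ : Fin N → Matrix (Fin m1) (Fin m2) ℂ), Ψ x Λ = ∑ n : Fin N,
      F n ((A n x)ᴴ * (Λ n) + (Λ n)ᴴ * (A n x) - (Λ n)ᴴ * (B n x) * (Λ n)))
    (x : α) (hx : x ∈ X) :
    IsGreatest {y : ℝ | ∃ Λ : Fin N → Matrix (Fin m1) (Fin m2) ℂ, y = Ψ x Λ} (Φ x) ∧
    Ψ x (fun n => (B n x)⁻¹ * (A n x)) = Φ x := by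
  have hBpd n : (B n x).PosDef := (hB x hx n).2
  have hΨ' Λ : Ψ x Λ = ∑ n, F n (quadTransform (A n x) (B n x) (Λ n)) := hΨ x Λ
  have hattain : Ψ x (fun n => (B n x)⁻¹ * (A n x)) = Φ x := by
    rw [hΨ', hΦ]
    exact Finset.sum_congr rfl fun n _ => by
      rw [quadTransform_inv_mul (hBpd n).isHermitian
        ((isUnit_iff_isUnit_det _).1 (hBpd n).isUnit)]
  refine ⟨⟨⟨_, hattain.symm⟩, ?_⟩, hattain⟩
  rintro y ⟨Λ, rfl⟩
  rw [hΨ', hΦ]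
  exact Finset.sum_le_sum fun n _ => hF n _ _ ((hBpd n).posSemidef_sub_quadTransform _ _)

/-- Matrix quadratic transform: for every `x ∈ X`, the original objective `Φ x`
is the greatest element of the set of values of the reformulated objective
`Ψ x Λ` over all auxiliary matrix variables `Λ`; the maximum is attained at
`Λ n = (B n x)⁻¹ * (A n x)` and equals `Φ x`. -/
theorem matrix_quadratic_transform_isGreatest (m1 m2 N : ℕ)
    (hm1 : 0 < m1) (hm2 : 0 < m2) (hN : 0 < N)
    {α : Type*} (X : Set α) (hX : X.Nonempty)
    (A : Fin N → α → Matrix (Fin m1) (Fin m2) ℂ)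
    (B : Fin N → α → Matrix (Fin m1) (Fin m1) ℂ)
    (hB : ∀ x ∈ X, ∀ n : Fin N, (B n x).IsHermitian ∧ (B n x).PosDef)
    (F : Fin N → Matrix (Fin m2) (Fin m2) ℂ → ℝ)
    (hF : ∀ n : Fin N, ∀ C C' : Matrix (Fin m2) (Fin m2) ℂ,
      (C - C').PosSemidef → F n C' ≤ F n C)
    (Φ : α → ℝ)
    (hΦ : ∀ x : α, Φ x = ∑ n : Fin N, F n ((A n x)ᴴ * (B n x)⁻¹ * (A n x)))
    (Ψ : α → (Fin N → Matrix (Fin m1) (Fin m2) ℂ) → ℝ)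
    (hΨ : ∀ (x : α) (Λ : Fin N → Matrix (Fin m1) (Fin m2) ℂ), Ψ x Λ = ∑ n : Fin N,
      F n ((A n x)ᴴ * (Λ n) + (Λ n)ᴴ * (A n x) - (Λ n)ᴴ * (B n x) * (Λ n)))
    (x : α) (hx : x ∈ X) :
    IsGreatest {y : ℝ | ∃ Λ : Fin N → Matrix (Fin m1) (Fin m2) ℂ, y = Ψ x Λ} (Φ x) ∧
    Ψ x (fun n => (B n x)⁻¹ * (A n x)) = Φ x :=
  matrix_quadratic_transform_isGreatest_general m1 m2 N X A B hB F hF Φ hΦ Ψ hΨ x hx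
end

section
/- Assume β l i j ≥ 0 for all l, i, j, α l k > 0 for all l, k, and σ² > 0. Fix a pilot configuration φ and define μ* by μ* l k = (β l l k) • ((D l φ)⁻¹ *ᵥ (φ l k)). Then for every μ : Fin L → Fin K → (Fin τ → ℂ), f φ μ ≤ f φ μ*, with equality if and only if μ = μ*. (The optimal update of the auxiliary variable in the quadratic transform is μ_{lk} = β_{llk} D_l⁻¹ φ_{lk}, and it is the unique maximizer.) -/
open Matrix ComplexConjugate
open scoped ComplexOrder

/-!
The covariance `D_l = σ² I + ∑ β_{lij} φ_{ij} φ_{ij}ᴴ` is positive definite, so the objective splits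
over users `(l, k)` into strictly concave quadratics `2 Re (μᴴ b) - μᴴ D_l μ` with `b = β_{llk} φ_{lk}`.
Completing the square, such a quadratic equals its value at `D_l⁻¹ b` minus the `D_l`-norm of the
deviation from `D_l⁻¹ b`, which vanishes only at `D_l⁻¹ b`; the weights `α_{lk} > 0` preserve this.
-/

section

variable {𝕜 : Type*} [RCLike 𝕜] {n : Type*} [Fintype n]

theorem Matrix.IsHermitian.re_star_dotProduct_mulVec_comm_s7 {M : Matrix n n 𝕜} (hM : M.IsHermitian)
    (x y : n → 𝕜) : RCLike.re (star x ⬝ᵥ M *ᵥ y) = RCLike.re (star y ⬝ᵥ M *ᵥ x) := by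
  rw [star_dotProduct, star_mulVec, ← dotProduct_mulVec, hM.eq, RCLike.star_def, RCLike.conj_re]

theorem Matrix.IsHermitian.re_complete_square {M : Matrix n n 𝕜} (hM : M.IsHermitian)
    {x₀ b : n → 𝕜} (hb : M *ᵥ x₀ = b) (y : n → 𝕜) :
    2 * RCLike.re (star y ⬝ᵥ b) - RCLike.re (star y ⬝ᵥ M *ᵥ y) =
      2 * RCLike.re (star x₀ ⬝ᵥ b) - RCLike.re (star x₀ ⬝ᵥ M *ᵥ x₀)
        - RCLike.re (star (y - x₀) ⬝ᵥ M *ᵥ (y - x₀)) := by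
  have hcross := hM.re_star_dotProduct_mulVec_comm_s7 x₀ (y - x₀)
  obtain ⟨d, rfl⟩ : ∃ d, y = x₀ + d := ⟨y - x₀, by abel⟩
  simp only [add_sub_cancel_left, star_add, add_dotProduct, mulVec_add, dotProduct_add,
    map_add, hb] at hcross ⊢
  linarith

theorem Matrix.PosDef.re_complete_square_lt {M : Matrix n n 𝕜} (hM : M.PosDef)
    {x₀ b : n → 𝕜} (hb : M *ᵥ x₀ = b) {y : n → 𝕜} (hy : y ≠ x₀) :
    2 * RCLike.re (star y ⬝ᵥ b) - RCLike.re (star y ⬝ᵥ M *ᵥ y) <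
      2 * RCLike.re (star x₀ ⬝ᵥ b) - RCLike.re (star x₀ ⬝ᵥ M *ᵥ x₀) := by
  have hpos := (RCLike.pos_iff.mp (hM.dotProduct_mulVec_pos (sub_ne_zero.mpr hy))).1
  rw [hM.isHermitian.re_complete_square hb y]
  linarith

theorem Matrix.posDef_smul_one_add_sum_smul_vecMulVec [DecidableEq n] {ι : Type*} [Fintype ι]
    {σ : ℝ} (hσ : 0 < σ) {c : ι → ℝ} (hc : ∀ i, 0 ≤ c i) (v : ι → n → 𝕜) :
    (σ • (1 : Matrix n n 𝕜) + ∑ i, c i • vecMulVec (v i) (star (v i))).PosDef :=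
  (PosDef.one.smul hσ).add_posSemidef <|
    posSemidef_sum _ fun i _ => (posSemidef_vecMulVec_self_star (v i)).smul (hc i)

end

theorem Fintype.sum_lt_sum_of_strict_max {ι X M : Type*} [Fintype ι] [AddCommMonoid M]
    [PartialOrder M] [IsOrderedCancelAddMonoid M] {F : ι → X → M} {xmax : ι → X}
    (hF : ∀ i y, y ≠ xmax i → F i y < F i (xmax i)) {x : ι → X} (hx : x ≠ xmax) :
    ∑ i, F i (x i) < ∑ i, F i (xmax i) := by
  obtain ⟨i, hi⟩ := Function.ne_iff.mp hx
  refine Finset.sum_lt_sum (fun j _ => ?_) ⟨i, Finset.mem_univ i, hF i _ hi⟩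
  by_cases hj : x j = xmax j
  · rw [hj]
  · exact (hF j _ hj).le

theorem pilot_optimal_auxiliary_update_general (L K τ : ℕ)
    (σ2 : ℝ) (hσ2 : 0 < σ2)
    (β : Fin L → Fin L → Fin K → ℝ) (hβ : ∀ l i j, 0 ≤ β l i j)
    (α : Fin L → Fin K → ℝ) (hα : ∀ l k, 0 < α l k)
    (D : Fin L → (Fin L → Fin K → (Fin τ → ℂ)) → Matrix (Fin τ) (Fin τ) ℂ)
    (hD : ∀ l φ s t, D l φ s t =
      (σ2 : ℂ) * (if s = t then 1 else 0) +
        ∑ i : Fin L, ∑ j : Fin K, (β l i j : ℂ) * (φ i j s) * conj (φ i j t))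
    (f : (Fin L → Fin K → (Fin τ → ℂ)) → (Fin L → Fin K → (Fin τ → ℂ)) → ℝ)
    (hf : ∀ φ μ, f φ μ = ∑ l : Fin L, ∑ k : Fin K,
      α l k * (2 * (β l l k) * (star (μ l k) ⬝ᵥ (φ l k)).re -
        (star (μ l k) ⬝ᵥ ((D l φ) *ᵥ (μ l k))).re))
    (φ : Fin L → Fin K → (Fin τ → ℂ))
    (μstar : Fin L → Fin K → (Fin τ → ℂ))
    (hμstar : ∀ l k, μstar l k = (β l l k) • ((D l φ)⁻¹ *ᵥ (φ l k))) :
    ∀ μ : Fin L → Fin K → (Fin τ → ℂ),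
      f φ μ ≤ f φ μstar ∧ (f φ μ = f φ μstar ↔ μ = μstar) := by
  have hPD (l : Fin L) : (D l φ).PosDef := by
    have hDl : D l φ = σ2 • (1 : Matrix (Fin τ) (Fin τ) ℂ) +
        ∑ p : Fin L × Fin K, β l p.1 p.2 • vecMulVec (φ p.1 p.2) (star (φ p.1 p.2)) := by
      ext s t
      simp [hD, Fintype.sum_prod_type, Matrix.sum_apply, vecMulVec_apply, one_apply, mul_assoc]
    rw [hDl]
    exact posDef_smul_one_add_sum_smul_vecMulVec hσ2 (fun p : Fin L × Fin K => hβ l p.1 p.2)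
      (fun p => φ p.1 p.2)
  have hDμ (l : Fin L) (k : Fin K) : D l φ *ᵥ μstar l k = β l l k • φ l k := by
    rw [hμstar, mulVec_smul, mulVec_mulVec,
      mul_nonsing_inv _ ((D l φ).isUnit_iff_isUnit_det.mp (hPD l).isUnit), one_mulVec]
  set g : Fin L → Fin K → (Fin τ → ℂ) → ℝ := fun l k y =>
    α l k * (2 * β l l k * (star y ⬝ᵥ φ l k).re - (star y ⬝ᵥ D l φ *ᵥ y).re)
  have hterm (l : Fin L) (k : Fin K) (y : Fin τ → ℂ) (hy : y ≠ μstar l k) :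
      g l k y < g l k (μstar l k) := by
    have h := (hPD l).re_complete_square_lt (hDμ l k) hy
    simp only [dotProduct_smul, Complex.smul_re, smul_eq_mul, RCLike.re_to_complex] at h
    exact mul_lt_mul_of_pos_left (by linarith) (hα l k)
  have hfg (μ : Fin L → Fin K → (Fin τ → ℂ)) : f φ μ = ∑ l, ∑ k, g l k (μ l k) := hf φ μ
  intro μ
  rcases eq_or_ne μ μstar with rfl | hne
  · simp
  have hlt : f φ μ < f φ μstar := by
    rw [hfg, hfg]
    have hrow (l : Fin L) (ν : Fin K → Fin τ → ℂ) (hν : ν ≠ μstar l) :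
        ∑ k, g l k (ν k) < ∑ k, g l k (μstar l k) :=
      Fintype.sum_lt_sum_of_strict_max (hterm l) hν
    exact Fintype.sum_lt_sum_of_strict_max hrow hne
  exact ⟨hlt.le, iff_of_false hlt.ne hne⟩

/-- Optimal auxiliary-variable update in the quadratic transform for pilot design:
with `μ* l k = β_{llk} • (D_l φ)⁻¹ *ᵥ φ_{lk}`, for every `μ` one has
`f φ μ ≤ f φ μ*`, with equality iff `μ = μ*`. -/
theorem pilot_optimal_auxiliary_update (L K τ : ℕ)
    (hL : 0 < L) (hK : 0 < K) (hτ : 0 < τ)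
    (σ2 : ℝ) (hσ2 : 0 < σ2)
    (β : Fin L → Fin L → Fin K → ℝ) (hβ : ∀ l i j, 0 ≤ β l i j)
    (α : Fin L → Fin K → ℝ) (hα : ∀ l k, 0 < α l k)
    (D : Fin L → (Fin L → Fin K → (Fin τ → ℂ)) → Matrix (Fin τ) (Fin τ) ℂ)
    (hD : ∀ l φ s t, D l φ s t =
      (σ2 : ℂ) * (if s = t then 1 else 0) +
        ∑ i : Fin L, ∑ j : Fin K, (β l i j : ℂ) * (φ i j s) * conj (φ i j t))
    (f : (Fin L → Fin K → (Fin τ → ℂ)) → (Fin L → Fin K → (Fin τ → ℂ)) → ℝ)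
    (hf : ∀ φ μ, f φ μ = ∑ l : Fin L, ∑ k : Fin K,
      α l k * (2 * (β l l k) * (star (μ l k) ⬝ᵥ (φ l k)).re -
        (star (μ l k) ⬝ᵥ ((D l φ) *ᵥ (μ l k))).re))
    (φ : Fin L → Fin K → (Fin τ → ℂ))
    (μstar : Fin L → Fin K → (Fin τ → ℂ))
    (hμstar : ∀ l k, μstar l k = (β l l k) • ((D l φ)⁻¹ *ᵥ (φ l k))) :
    ∀ μ : Fin L → Fin K → (Fin τ → ℂ),
      f φ μ ≤ f φ μstar ∧ (f φ μ = f φ μstar ↔ μ = μstar) :=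
  pilot_optimal_auxiliary_update_general L K τ σ2 hσ2 β hβ α hα D hD f hf φ μstar hμstar
end

section
/- In the correlated multicell setup, fix Λ : Fin L → Fin K → Matrix (Fin τ × Fin M') (Fin M') ℂ and define v : Fin L → Fin K → (Fin τ → ℂ) by (v l k) s = (α l k * β l l k : ℂ) * Σ_{n : Fin M'} Σ_{m : Fin M'} (R l l k) n m * (Λ l k) (s, m) n, and Q : Fin L → Fin K → Matrix (Fin τ) (Fin τ) ℂ by (Q l k) s t = Σ_{i : Fin L} Σ_{j : Fin K} (α i j * β i l k : ℂ) * Σ_{m : Fin M'} Σ_{n : Fin M'} (R i l k) m n * ((Λ i j) * (Λ i j)ᴴ) (s, n) (t, m). Define g φ = Σ_{l,k} 2 * Re (star (φ l k) ⬝ᵥ (v l k)) − Σ_{l,k} Re (star (φ l k) ⬝ᵥ ((Q l k) *ᵥ (φ l k))). Then the difference f φ Λ − g φ does not depend on the pilots: for any two pilot configurations φ and φ', f φ Λ − g φ = f φ' Λ − g φ'. (This is the rewriting of the matrix quadratic-transform objective as per-user quadratic forms in the pilots plus a pilot-independent constant.) -/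
/-!
Write the pilot-dependent part of `U l` as `∑ i j, β l i j • (φ i j φ i jᴴ ⊗ R l i j)`. By
cyclicity, `tr (Λᴴ U Λ) = σ² tr (Λ Λᴴ) + ∑ β tr ((φ φᴴ ⊗ R) Λ Λᴴ)`, and tracing out the antenna
factor turns `tr ((x xᴴ ⊗ B) G)` into the quadratic form `xᴴ tr₂ (G (1 ⊗ B)) x`. Exchanging the
roles of the users `(l, k)` and `(i, j)` in the resulting quadruple sum collects these forms into
`∑ φᴴ Q φ`, while `α tr (W Λ) = φᴴ v` by direct expansion. Hence
`f φ Λ - g φ = -σ² ∑ α Re tr (Λ Λᴴ)`, which does not involve the pilots.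
-/

open Matrix ComplexConjugate
open scoped Kronecker

theorem Finset.sum_sum_sum_sum_comm {α β γ δ M : Type*} [Fintype α] [Fintype β] [Fintype γ]
    [Fintype δ] [AddCommMonoid M] (f : α → β → γ → δ → M) :
    ∑ a, ∑ b, ∑ c, ∑ d, f a b c d = ∑ c, ∑ d, ∑ a, ∑ b, f a b c d := by
  simpa only [Fintype.sum_prod_type] using
    Finset.sum_comm (s := .univ (α := α × β)) (t := .univ (α := γ × δ))
      (f := fun p q => f p.1 p.2 q.1 q.2)

namespace Matrix

variable {ι μ 𝕜 : Type*} [Fintype ι] [Fintype μ] [CommSemiring 𝕜]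

def partialTraceRight (G : Matrix (ι × μ) (ι × μ) 𝕜) : Matrix ι ι 𝕜 :=
  of fun s t => ∑ n, G (s, n) (t, n)

theorem trace_kronecker_one_mul [DecidableEq μ] (A : Matrix ι ι 𝕜)
    (G : Matrix (ι × μ) (ι × μ) 𝕜) :
    trace ((A ⊗ₖ (1 : Matrix μ μ 𝕜)) * G) = trace (A * partialTraceRight G) := by
  simp only [trace, diag_apply, mul_apply, kroneckerMap_apply, one_apply, mul_ite, mul_one,
    mul_zero, ite_mul, zero_mul, Fintype.sum_prod_type, Finset.sum_ite_eq, Finset.mem_univ,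
    ↓reduceIte, partialTraceRight, of_apply, Finset.mul_sum]
  exact Finset.sum_congr rfl fun _ _ => Finset.sum_comm

theorem trace_kronecker_mul [DecidableEq ι] [DecidableEq μ] (A : Matrix ι ι 𝕜) (B : Matrix μ μ 𝕜)
    (G : Matrix (ι × μ) (ι × μ) 𝕜) :
    trace ((A ⊗ₖ B) * G) = trace (A * partialTraceRight (G * (1 ⊗ₖ B))) := by
  rw [← trace_kronecker_one_mul, trace_mul_comm (A ⊗ₖ 1), Matrix.mul_assoc, ← mul_kronecker_mul,
    Matrix.one_mul, Matrix.mul_one, trace_mul_comm]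

theorem partialTraceRight_mul_one_kronecker_apply [DecidableEq ι] (G : Matrix (ι × μ) (ι × μ) 𝕜)
    (B : Matrix μ μ 𝕜) (s t : ι) :
    partialTraceRight (G * (1 ⊗ₖ B)) s t = ∑ m, ∑ n, B m n * G (s, n) (t, m) := by
  simp only [partialTraceRight, mul_apply, kroneckerMap_apply, one_apply, ite_mul, one_mul,
    zero_mul, mul_ite, mul_zero, Fintype.sum_prod_type, Finset.sum_ite_irrel,
    Finset.sum_const_zero, Finset.sum_ite_eq', Finset.mem_univ, ↓reduceIte, of_apply]
  rw [Finset.sum_comm]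
  simp_rw [mul_comm]

theorem trace_vecMulVec_mul (x y : ι → 𝕜) (B : Matrix ι ι 𝕜) :
    trace (vecMulVec x y * B) = y ⬝ᵥ (B *ᵥ x) := by
  rw [trace_mul_comm, mul_vecMulVec, trace_vecMulVec, dotProduct_comm]

theorem sum_trace_sum_kronecker_mul {ℓ κ : Type*} [Fintype ℓ] [Fintype κ] [DecidableEq ι]
    [DecidableEq μ] (a : ℓ → κ → 𝕜) (b : ℓ → ℓ → κ → 𝕜) (B : ℓ → ℓ → κ → Matrix μ μ 𝕜)
    (x y : ℓ → κ → ι → 𝕜) (G : ℓ → κ → Matrix (ι × μ) (ι × μ) 𝕜) :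
    ∑ l, ∑ k, a l k * trace ((∑ i, ∑ j, b l i j • (vecMulVec (x i j) (y i j) ⊗ₖ B l i j)) * G l k) =
      ∑ l, ∑ k, y l k ⬝ᵥ ((∑ i, ∑ j,
        (a i j * b i l k) • partialTraceRight (G i j * (1 ⊗ₖ B i l k))) *ᵥ x l k) := by
  simp only [Matrix.sum_mul, trace_sum, smul_mul, trace_smul, trace_kronecker_mul,
    trace_vecMulVec_mul, sum_mulVec, dotProduct_sum, smul_mulVec, dotProduct_smul, Finset.mul_sum,
    smul_eq_mul]
  rw [Finset.sum_sum_sum_sum_comm]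
  simp only [mul_assoc]

end Matrix

theorem correlated_objective_quadratic_rewrite_general (L K τ M' : ℕ)
    (σ2 : ℝ)
    (β : Fin L → Fin L → Fin K → ℝ)
    (α : Fin L → Fin K → ℝ)
    (R : Fin L → Fin L → Fin K → Matrix (Fin M') (Fin M') ℂ)
    (W : (Fin L → Fin K → (Fin τ → ℂ)) →
      Fin L → Fin K → Matrix (Fin M') (Fin τ × Fin M') ℂ)
    (hW : ∀ (φ : Fin L → Fin K → (Fin τ → ℂ)) (l : Fin L) (k : Fin K)
      (n : Fin M') (sm : Fin τ × Fin M'),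
      W φ l k n sm = (β l l k : ℂ) * conj (φ l k sm.1) * (R l l k) n sm.2)
    (U : (Fin L → Fin K → (Fin τ → ℂ)) →
      Fin L → Matrix (Fin τ × Fin M') (Fin τ × Fin M') ℂ)
    (hU : ∀ (φ : Fin L → Fin K → (Fin τ → ℂ)) (l : Fin L) (sm tn : Fin τ × Fin M'),
      U φ l sm tn = (σ2 : ℂ) * (if sm = tn then 1 else 0) +
        ∑ i : Fin L, ∑ j : Fin K,
          (β l i j : ℂ) * (φ i j sm.1) * conj (φ i j tn.1) * (R l i j) sm.2 tn.2)
    (f : (Fin L → Fin K → (Fin τ → ℂ)) →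
      (Fin L → Fin K → Matrix (Fin τ × Fin M') (Fin M') ℂ) → ℝ)
    (hf : ∀ (φ : Fin L → Fin K → (Fin τ → ℂ))
      (Λ : Fin L → Fin K → Matrix (Fin τ × Fin M') (Fin M') ℂ),
      f φ Λ = ∑ l : Fin L, ∑ k : Fin K,
        α l k * (2 * (Matrix.trace ((W φ l k) * (Λ l k))).re -
          (Matrix.trace ((Λ l k)ᴴ * (U φ l) * (Λ l k))).re))
    (Λ : Fin L → Fin K → Matrix (Fin τ × Fin M') (Fin M') ℂ)
    (v : Fin L → Fin K → (Fin τ → ℂ))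
    (hv : ∀ (l : Fin L) (k : Fin K) (s : Fin τ),
      v l k s = ((α l k * β l l k : ℝ) : ℂ) *
        ∑ n : Fin M', ∑ m : Fin M', (R l l k) n m * (Λ l k) (s, m) n)
    (Q : Fin L → Fin K → Matrix (Fin τ) (Fin τ) ℂ)
    (hQ : ∀ (l : Fin L) (k : Fin K) (s t : Fin τ),
      Q l k s t = ∑ i : Fin L, ∑ j : Fin K, ((α i j * β i l k : ℝ) : ℂ) *
        ∑ m : Fin M', ∑ n : Fin M', (R i l k) m n * ((Λ i j) * (Λ i j)ᴴ) (s, n) (t, m))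
    (g : (Fin L → Fin K → (Fin τ → ℂ)) → ℝ)
    (hg : ∀ φ : Fin L → Fin K → (Fin τ → ℂ),
      g φ = (∑ l : Fin L, ∑ k : Fin K, 2 * (star (φ l k) ⬝ᵥ (v l k)).re) -
        ∑ l : Fin L, ∑ k : Fin K, (star (φ l k) ⬝ᵥ ((Q l k) *ᵥ (φ l k))).re) :
    ∀ φ φ' : Fin L → Fin K → (Fin τ → ℂ),
      f φ Λ - g φ = f φ' Λ - g φ' := by
  have hU_kronecker : ∀ φ l, U φ l = (σ2 : ℂ) • 1 +
      ∑ i, ∑ j, (β l i j : ℂ) • (vecMulVec (φ i j) (star (φ i j)) ⊗ₖ R l i j) := fun φ l => by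
    ext sm tn
    simp [hU, one_apply, vecMulVec_apply, Matrix.sum_apply, mul_assoc]
  have hQ_partialTrace : ∀ l k, Q l k = ∑ i, ∑ j, ((α i j * β i l k : ℝ) : ℂ) •
      partialTraceRight (Λ i j * (Λ i j)ᴴ * (1 ⊗ₖ R i l k)) := fun l k => by
    ext s t
    simp [hQ, partialTraceRight_mul_one_kronecker_apply, Matrix.sum_apply]
  have hlin : ∀ φ l k, α l k * (trace (W φ l k * Λ l k)).re = (star (φ l k) ⬝ᵥ v l k).re := by
    intro φ l k
    rw [← Complex.re_ofReal_mul]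
    congr 1
    simp only [trace, diag_apply, mul_apply, hW, dotProduct, Pi.star_apply, hv,
      Fintype.sum_prod_type, Finset.mul_sum, Complex.ofReal_mul, RCLike.star_def]
    rw [Finset.sum_comm]
    exact Finset.sum_congr rfl fun s _ => Finset.sum_congr rfl fun n _ =>
      Finset.sum_congr rfl fun m _ => by ring
  have hquad : ∀ φ, ∑ l, ∑ k, (α l k : ℂ) * trace ((Λ l k)ᴴ * U φ l * Λ l k) =
      σ2 * ∑ l, ∑ k, (α l k : ℂ) * trace (Λ l k * (Λ l k)ᴴ) +
        ∑ l, ∑ k, star (φ l k) ⬝ᵥ (Q l k *ᵥ φ l k) := by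
    intro φ
    simp_rw [trace_mul_cycle _ (U φ _), trace_mul_comm _ (U φ _)]
    simp only [hU_kronecker, Matrix.add_mul, trace_add, smul_mul, Matrix.one_mul, trace_smul, mul_add,
      Finset.sum_add_distrib, sum_trace_sum_kronecker_mul, hQ_partialTrace, Complex.ofReal_mul]
    congr 1
    simp only [Finset.mul_sum, smul_eq_mul, mul_left_comm]
  have key : ∀ φ, f φ Λ - g φ = -(σ2 * ∑ l, ∑ k, α l k * (trace (Λ l k * (Λ l k)ᴴ)).re) := by
    intro φ
    have hquad_re := congrArg Complex.re (hquad φ)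
    simp only [Complex.add_re, Complex.re_ofReal_mul, Complex.re_sum] at hquad_re
    rw [hf, hg]
    simp only [mul_sub, Finset.sum_sub_distrib, mul_left_comm _ (2 : ℝ), hlin, ← Finset.mul_sum]
    linarith
  intro φ φ'
  rw [key, key]

/-- Rewriting of the correlated-channel matrix quadratic-transform objective as
per-user quadratic forms in the pilots plus a pilot-independent constant:
with `v`, `Q` and `g` as defined from a fixed `Λ`, the difference `f φ Λ − g φ`
does not depend on the pilot configuration `φ`. -/
theorem correlated_objective_quadratic_rewrite (L K τ M' : ℕ)
    (hL : 0 < L) (hK : 0 < K) (hτ : 0 < τ) (hM' : 0 < M')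
    (σ2 : ℝ) (hσ2 : 0 < σ2)
    (β : Fin L → Fin L → Fin K → ℝ)
    (α : Fin L → Fin K → ℝ)
    (R : Fin L → Fin L → Fin K → Matrix (Fin M') (Fin M') ℂ)
    (W : (Fin L → Fin K → (Fin τ → ℂ)) →
      Fin L → Fin K → Matrix (Fin M') (Fin τ × Fin M') ℂ)
    (hW : ∀ (φ : Fin L → Fin K → (Fin τ → ℂ)) (l : Fin L) (k : Fin K)
      (n : Fin M') (sm : Fin τ × Fin M'),
      W φ l k n sm = (β l l k : ℂ) * conj (φ l k sm.1) * (R l l k) n sm.2)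
    (U : (Fin L → Fin K → (Fin τ → ℂ)) →
      Fin L → Matrix (Fin τ × Fin M') (Fin τ × Fin M') ℂ)
    (hU : ∀ (φ : Fin L → Fin K → (Fin τ → ℂ)) (l : Fin L) (sm tn : Fin τ × Fin M'),
      U φ l sm tn = (σ2 : ℂ) * (if sm = tn then 1 else 0) +
        ∑ i : Fin L, ∑ j : Fin K,
          (β l i j : ℂ) * (φ i j sm.1) * conj (φ i j tn.1) * (R l i j) sm.2 tn.2)
    (f : (Fin L → Fin K → (Fin τ → ℂ)) →
      (Fin L → Fin K → Matrix (Fin τ × Fin M') (Fin M') ℂ) → ℝ)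
    (hf : ∀ (φ : Fin L → Fin K → (Fin τ → ℂ))
      (Λ : Fin L → Fin K → Matrix (Fin τ × Fin M') (Fin M') ℂ),
      f φ Λ = ∑ l : Fin L, ∑ k : Fin K,
        α l k * (2 * (Matrix.trace ((W φ l k) * (Λ l k))).re -
          (Matrix.trace ((Λ l k)ᴴ * (U φ l) * (Λ l k))).re))
    (Λ : Fin L → Fin K → Matrix (Fin τ × Fin M') (Fin M') ℂ)
    (v : Fin L → Fin K → (Fin τ → ℂ))
    (hv : ∀ (l : Fin L) (k : Fin K) (s : Fin τ),
      v l k s = ((α l k * β l l k : ℝ) : ℂ) *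
        ∑ n : Fin M', ∑ m : Fin M', (R l l k) n m * (Λ l k) (s, m) n)
    (Q : Fin L → Fin K → Matrix (Fin τ) (Fin τ) ℂ)
    (hQ : ∀ (l : Fin L) (k : Fin K) (s t : Fin τ),
      Q l k s t = ∑ i : Fin L, ∑ j : Fin K, ((α i j * β i l k : ℝ) : ℂ) *
        ∑ m : Fin M', ∑ n : Fin M', (R i l k) m n * ((Λ i j) * (Λ i j)ᴴ) (s, n) (t, m))
    (g : (Fin L → Fin K → (Fin τ → ℂ)) → ℝ)
    (hg : ∀ φ : Fin L → Fin K → (Fin τ → ℂ),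
      g φ = (∑ l : Fin L, ∑ k : Fin K, 2 * (star (φ l k) ⬝ᵥ (v l k)).re) -
        ∑ l : Fin L, ∑ k : Fin K, (star (φ l k) ⬝ᵥ ((Q l k) *ᵥ (φ l k))).re) :
    ∀ φ φ' : Fin L → Fin K → (Fin τ → ℂ),
      f φ Λ - g φ = f φ' Λ - g φ' :=
  correlated_objective_quadratic_rewrite_general L K τ M' σ2 β α R W hW U hU f hf Λ v hv Q hQ g hg
end

section
/- Let τ and n be positive naturals, σ² > 0 a real number, c : Fin n → ℝ with c s ≥ 0 for all s, and v : Fin n → (Fin τ → ℂ) a family of pairwise orthogonal vectors with star (v s) ⬝ᵥ (v t) = 0 for s ≠ t and star (v s) ⬝ᵥ (v s) = (τ : ℂ) for all s. Let D : Matrix (Fin τ) (Fin τ) ℂ be defined by D s' t' = σ² * (if s' = t' then 1 else 0) + Σ_{s : Fin n} (c s : ℂ) * (v s s') * conj (v s t'). Then D is invertible, and for every t : Fin n, D⁻¹ *ᵥ (v t) = ((σ² + τ * c t : ℂ)⁻¹) • (v t). -/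
open Matrix ComplexConjugate
open scoped ComplexOrder

/-!
Writing `D = σ² • 1 + ∑ₛ cₛ • vₛ vₛᴴ`, orthogonality kills every rank-one term but the
`t`-th on `vₜ`, so `D vₜ = (σ² + τ cₜ) vₜ`. The matrix `D` is positive definite, hence
invertible, and inverting the eigenvalue equation gives the resolvent.
-/

namespace Matrix

variable {m ι : Type*} [Fintype m]

theorem inv_mulVec_eq_inv_smul_of_mulVec_eq_smul {K : Type*} [DecidableEq m] [Field K]
    {A : Matrix m m K} (hA : IsUnit A) {x : m → K} {μ : K} (h : A *ᵥ x = μ • x) :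
    A⁻¹ *ᵥ x = μ⁻¹ • x := by
  rcases eq_or_ne μ 0 with rfl | hμ
  · have hx : x = 0 := mulVec_injective_of_isUnit hA (by rw [h, zero_smul, mulVec_zero])
    simp [hx]
  · let _ := hA.invertible
    exact inv_mulVec_eq_vec (by rw [mulVec_smul, h, smul_smul, inv_mul_cancel₀ hμ, one_smul])

theorem sum_smul_vecMulVec_self_star_mulVec_of_orthogonal [Fintype ι] {R α : Type*}
    [CommSemiring R] [StarRing R] [Monoid α] [DistribMulAction α R] [IsScalarTower α R R]
    [SMulCommClass α R R] (c : ι → α) {v : ι → m → R}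
    (horth : ∀ s t, s ≠ t → star (v s) ⬝ᵥ v t = 0) (t : ι) :
    (∑ s, c s • vecMulVec (v s) (star (v s))) *ᵥ v t = (star (v t) ⬝ᵥ v t) • c t • v t := by
  rw [sum_mulVec, Finset.sum_eq_single t (fun s _ hs => by
    rw [smul_mulVec, vecMulVec_mulVec, horth s t hs]; simp) (by simp)]
  rw [smul_mulVec, vecMulVec_mulVec]
  simp [smul_comm (c t)]

theorem posDef_smul_one_add_sum_smul_vecMulVec_self_star [Fintype ι] [DecidableEq m]
    {σ2 : ℝ} (hσ2 : 0 < σ2) {c : ι → ℝ} (hc : ∀ s, 0 ≤ c s) (v : ι → m → ℂ) :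
    (σ2 • (1 : Matrix m m ℂ) + ∑ s, c s • vecMulVec (v s) (star (v s))).PosDef :=
  (PosDef.one.smul hσ2).add_posSemidef <|
    posSemidef_sum _ fun s _ => (posSemidef_vecMulVec_self_star (v s)).smul (hc s)

end Matrix

theorem orthogonal_pilot_resolvent_general (τ n : ℕ)
    (σ2 : ℝ) (hσ2 : 0 < σ2)
    (c : Fin n → ℝ) (hc : ∀ s, 0 ≤ c s)
    (v : Fin n → (Fin τ → ℂ))
    (horth : ∀ s t, s ≠ t → star (v s) ⬝ᵥ (v t) = 0)
    (hnorm : ∀ s, star (v s) ⬝ᵥ (v s) = (τ : ℂ))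
    (D : Matrix (Fin τ) (Fin τ) ℂ)
    (hD : ∀ s' t', D s' t' = (σ2 : ℂ) * (if s' = t' then 1 else 0) +
      ∑ s : Fin n, (c s : ℂ) * (v s s') * conj (v s t')) :
    IsUnit D ∧
    ∀ t : Fin n, D⁻¹ *ᵥ (v t) = (((σ2 + (τ : ℝ) * c t : ℝ) : ℂ)⁻¹) • (v t) := by
  have hD_eq : D = σ2 • (1 : Matrix (Fin τ) (Fin τ) ℂ) +
      ∑ s, c s • vecMulVec (v s) (star (v s)) := by
    ext s' t'
    simp [hD, one_apply, Matrix.sum_apply, vecMulVec_apply, Complex.real_smul, mul_assoc]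
  have hunit : IsUnit D :=
    hD_eq ▸ (posDef_smul_one_add_sum_smul_vecMulVec_self_star hσ2 hc v).isUnit
  refine ⟨hunit, fun t => inv_mulVec_eq_inv_smul_of_mulVec_eq_smul hunit ?_⟩
  rw [hD_eq, add_mulVec, smul_mulVec, one_mulVec,
    sum_smul_vecMulVec_self_star_mulVec_of_orthogonal c horth, hnorm]
  ext i
  simp only [Pi.add_apply, Pi.smul_apply, Complex.real_smul, smul_eq_mul, Complex.ofReal_add,
    Complex.ofReal_mul, Complex.ofReal_natCast]
  ring

/-- Closed-form resolvent for covariance matrices built from scaled-orthogonal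
pilots: if `D = σ² I + Σ_s c_s v_s v_sᴴ` with `c_s ≥ 0`, `vₛᴴ vₜ = 0` for `s ≠ t`
and `‖vₛ‖² = τ`, then `D` is invertible and `D⁻¹ vₜ = vₜ / (σ² + τ cₜ)`. -/
theorem orthogonal_pilot_resolvent (τ n : ℕ) (hτ : 0 < τ) (hn : 0 < n)
    (σ2 : ℝ) (hσ2 : 0 < σ2)
    (c : Fin n → ℝ) (hc : ∀ s, 0 ≤ c s)
    (v : Fin n → (Fin τ → ℂ))
    (horth : ∀ s t, s ≠ t → star (v s) ⬝ᵥ (v t) = 0)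
    (hnorm : ∀ s, star (v s) ⬝ᵥ (v s) = (τ : ℂ))
    (D : Matrix (Fin τ) (Fin τ) ℂ)
    (hD : ∀ s' t', D s' t' = (σ2 : ℂ) * (if s' = t' then 1 else 0) +
      ∑ s : Fin n, (c s : ℂ) * (v s s') * conj (v s t')) :
    IsUnit D ∧
    ∀ t : Fin n, D⁻¹ *ᵥ (v t) = (((σ2 + (τ : ℝ) * c t : ℝ) : ℂ)⁻¹) • (v t) :=
  orthogonal_pilot_resolvent_general τ n σ2 hσ2 c hc v horth hnorm D hD
end

section
/- Assume σ² > 0, β l i j ≥ 0 and p l k > 0 for all indices, and let the pilots be orthogonal: φ l k = (Real.sqrt (p l k) : ℂ) • v (ψ l k). Fix (l, k) and suppose the pilot-contamination interference I = Σ_{(i,j) ≠ (l,k), ψ i j = ψ l k} (β l i j)^2 * (p i j) is strictly positive. For a positive natural M, define q = Re (star (φ l k) ⬝ᵥ ((D l)⁻¹ *ᵥ (φ l k))), S = (β l l k)^2 * q^2, and den M = (1 / M) * (Σ_{i,j} β l i j + σ²) * q + Σ_{i : Fin L} Σ_{j : Fin K} (β l i j)^2 * ‖star (φ i j) ⬝ᵥ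 ((D l)⁻¹ *ᵥ (φ l k))‖² − S, and R M = Real.logb 2 (1 + S / den M). Then, as M → ∞ (Filter.atTop on ℕ), R M tends to Real.logb 2 (1 + (β l l k)^2 * (p l k) / I). -/
open Matrix ComplexConjugate
open scoped ComplexOrder

/-!
Orthogonality of the pilots makes each pilot `v t` an eigenvector of the covariance
`D = σ² 𝟙 + ∑ᵢ βᵢ φᵢ φᵢᴴ`, with eigenvalue `λₜ = σ² + τ ∑_{ψ i = t} βᵢ pᵢ`. Hence
`D⁻¹ φ_{lk} = λ⁻¹ φ_{lk}`, and the inner product `φᵢᴴ D⁻¹ φ_{lk}` vanishes unless user `i`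
shares the pilot of `(l, k)`. With `G = p_{lk} τ² / λ²` this gives `q = p_{lk} τ / λ`,
`S = β_{llk}² p_{lk} G` and `den M = c / M + G I`, so `S / den M → β_{llk}² p_{lk} / I`.
-/

theorem sum_ite_ne_and_add {α M : Type*} [Fintype α] [DecidableEq α] [AddCommMonoid M]
    {P : α → Prop} [DecidablePred P] {a : α} (ha : P a) (f : α → M) :
    (∑ x, if x ≠ a ∧ P x then f x else 0) + f a = ∑ x, if P x then f x else 0 := by
  rw [Fintype.sum_eq_add_sum_compl a,
    Fintype.sum_eq_add_sum_compl a (fun x => if P x then _ else _)]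
  simp only [ne_eq, not_true_eq_false, false_and, if_false, zero_add, if_pos ha]
  rw [add_comm]
  congr 1
  refine Finset.sum_congr rfl fun x hx => ?_
  have hxa : x ≠ a := by simpa using hx
  simp [hxa]

open Filter Topology in
theorem tendsto_logb_one_add_div_one_div_mul_add (b c : ℝ) {S E : ℝ} (hE : E ≠ 0)
    (h : 1 + S / E ≠ 0) :
    Tendsto (fun M : ℕ => Real.logb b (1 + S / (1 / M * c + E))) atTop
      (𝓝 (Real.logb b (1 + S / E))) := by
  have hden : Tendsto (fun M : ℕ => 1 / (M : ℝ) * c + E) atTop (𝓝 E) := by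
    simpa using (tendsto_one_div_atTop_nhds_zero_nat.mul_const c).add_const E
  exact (Real.continuousAt_logb h).tendsto.comp ((tendsto_const_nhds.div hden hE).const_add 1)

theorem star_dotProduct_eq_ite {κ n R : Type*} [Fintype n] [Mul R] [AddCommMonoid R] [Star R]
    [DecidableEq κ] {v : κ → n → R} {c : R} (horth : ∀ s t, s ≠ t → star (v s) ⬝ᵥ v t = 0)
    (hnorm : ∀ s, star (v s) ⬝ᵥ v s = c) (s t : κ) :
    star (v s) ⬝ᵥ v t = if s = t then c else 0 := by
  split_ifs with h
  · rw [h, hnorm]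
  · exact horth s t h

namespace MassiveMIMO

section Covariance

variable {ι n : Type*} [Fintype ι] [DecidableEq n]

noncomputable def covariance (σ2 : ℝ) (β : ι → ℝ) (φ : ι → n → ℂ) : Matrix n n ℂ :=
  σ2 • 1 + ∑ i, β i • vecMulVec (φ i) (star (φ i))

theorem covariance_apply (σ2 : ℝ) (β : ι → ℝ) (φ : ι → n → ℂ) (s t : n) :
    covariance σ2 β φ s t =
      σ2 * (if s = t then 1 else 0) + ∑ i, β i * φ i s * conj (φ i t) := by
  simp [covariance, Matrix.sum_apply, one_apply, vecMulVec_apply, mul_assoc]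

variable [Fintype n]

theorem posDef_covariance {σ2 : ℝ} {β : ι → ℝ} (hσ2 : 0 < σ2) (hβ : ∀ i, 0 ≤ β i)
    (φ : ι → n → ℂ) : (covariance σ2 β φ).PosDef :=
  (PosDef.one.smul hσ2).add_posSemidef <|
    posSemidef_sum _ fun i _ => (posSemidef_vecMulVec_self_star _).smul (hβ i)

theorem covariance_mulVec (σ2 : ℝ) (β : ι → ℝ) (φ : ι → n → ℂ) (x : n → ℂ) :
    covariance σ2 β φ *ᵥ x = σ2 • x + ∑ i, β i • (star (φ i) ⬝ᵥ x) • φ i := by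
  simp [covariance, add_mulVec, sum_mulVec, smul_mulVec, vecMulVec_mulVec]

end Covariance

section OrthogonalPilots

variable {ι κ n : Type*} [Fintype n] [DecidableEq κ] {N : ℝ} {v : κ → n → ℂ}
  {p : ι → ℝ} {ψ : ι → κ} {φ : ι → n → ℂ}

theorem star_pilot_dotProduct (hv : ∀ s t, star (v s) ⬝ᵥ v t = if s = t then (N : ℂ) else 0)
    (hφ : ∀ i, φ i = (√(p i) : ℂ) • v (ψ i)) (i : ι) (t : κ) :
    star (φ i) ⬝ᵥ v t = if ψ i = t then ((√(p i) * N : ℝ) : ℂ) else 0 := by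
  simp [hφ, star_smul, smul_dotProduct, hv]

variable [Fintype ι]

def pilotEigenvalue (σ2 N : ℝ) (β p : ι → ℝ) (ψ : ι → κ) (t : κ) : ℝ :=
  σ2 + N * ∑ i, if ψ i = t then β i * p i else 0

theorem pilotEigenvalue_pos {σ2 : ℝ} {β : ι → ℝ} (hσ2 : 0 < σ2) (hN : 0 ≤ N)
    (hβ : ∀ i, 0 ≤ β i) (hp : ∀ i, 0 ≤ p i) (t : κ) : 0 < pilotEigenvalue σ2 N β p ψ t := by
  have : 0 ≤ ∑ i, if ψ i = t then β i * p i else 0 :=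
    Finset.sum_nonneg fun i _ => by split_ifs; exacts [mul_nonneg (hβ i) (hp i), le_rfl]
  unfold pilotEigenvalue
  positivity

variable [DecidableEq n]

theorem covariance_mulVec_pilot (hv : ∀ s t, star (v s) ⬝ᵥ v t = if s = t then (N : ℂ) else 0)
    (hφ : ∀ i, φ i = (√(p i) : ℂ) • v (ψ i)) (hp : ∀ i, 0 ≤ p i) (σ2 : ℝ) (β : ι → ℝ)
    (t : κ) : covariance σ2 β φ *ᵥ v t = pilotEigenvalue σ2 N β p ψ t • v t := by
  have hterm : ∀ i, β i • (star (φ i) ⬝ᵥ v t) • φ i =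
      (N * if ψ i = t then β i * p i else 0) • v t := by
    intro i
    rw [star_pilot_dotProduct hv hφ]
    split_ifs with h
    · have hsq : (√(p i) : ℂ) * √(p i) = p i := by exact_mod_cast Real.mul_self_sqrt (hp i)
      ext s
      simp only [hφ, h, Complex.ofReal_mul, Complex.coe_smul, Pi.smul_apply, Complex.real_smul,
        smul_eq_mul]
      linear_combination (β i * N * v t s : ℂ) * hsq
    · simp
  rw [covariance_mulVec, Finset.sum_congr rfl fun i _ => hterm i, ← Finset.sum_smul,
    ← Finset.mul_sum, pilotEigenvalue, add_smul]

theorem covariance_inv_mulVec_pilot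
    (hv : ∀ s t, star (v s) ⬝ᵥ v t = if s = t then (N : ℂ) else 0)
    (hφ : ∀ i, φ i = (√(p i) : ℂ) • v (ψ i)) {σ2 : ℝ} {β : ι → ℝ} (hσ2 : 0 < σ2) (hN : 0 ≤ N)
    (hβ : ∀ i, 0 ≤ β i) (hp : ∀ i, 0 ≤ p i) (a : ι) :
    (covariance σ2 β φ)⁻¹ *ᵥ φ a = (pilotEigenvalue σ2 N β p ψ (ψ a))⁻¹ • φ a := by
  have := (posDef_covariance hσ2 hβ φ).isUnit.invertible
  refine inv_mulVec_eq_vec ?_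
  rw [mulVec_smul, hφ a, mulVec_smul, covariance_mulVec_pilot hv hφ hp, smul_comm,
    inv_smul_smul₀ (pilotEigenvalue_pos hσ2 hN hβ hp (ψ a)).ne']

theorem star_pilot_dotProduct_covariance_inv_mulVec
    (hv : ∀ s t, star (v s) ⬝ᵥ v t = if s = t then (N : ℂ) else 0)
    (hφ : ∀ i, φ i = (√(p i) : ℂ) • v (ψ i)) {σ2 : ℝ} {β : ι → ℝ} (hσ2 : 0 < σ2) (hN : 0 ≤ N)
    (hβ : ∀ i, 0 ≤ β i) (hp : ∀ i, 0 ≤ p i) (i a : ι) :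
    star (φ i) ⬝ᵥ ((covariance σ2 β φ)⁻¹ *ᵥ φ a) =
      ((if ψ i = ψ a then √(p i) * √(p a) * N / pilotEigenvalue σ2 N β p ψ (ψ a) else 0 : ℝ) :
        ℂ) := by
  rw [covariance_inv_mulVec_pilot hv hφ hσ2 hN hβ hp, dotProduct_smul, hφ a, dotProduct_smul,
    star_pilot_dotProduct hv hφ]
  split_ifs
  · simp only [smul_eq_mul, Complex.real_smul, Complex.ofReal_mul, Complex.ofReal_div,
      Complex.ofReal_inv]
    ring
  · simp

theorem re_star_pilot_dotProduct_covariance_inv_mulVec_self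
    (hv : ∀ s t, star (v s) ⬝ᵥ v t = if s = t then (N : ℂ) else 0)
    (hφ : ∀ i, φ i = (√(p i) : ℂ) • v (ψ i)) {σ2 : ℝ} {β : ι → ℝ} (hσ2 : 0 < σ2) (hN : 0 ≤ N)
    (hβ : ∀ i, 0 ≤ β i) (hp : ∀ i, 0 ≤ p i) (a : ι) :
    (star (φ a) ⬝ᵥ ((covariance σ2 β φ)⁻¹ *ᵥ φ a)).re =
      p a * N / pilotEigenvalue σ2 N β p ψ (ψ a) := by
  rw [star_pilot_dotProduct_covariance_inv_mulVec hv hφ hσ2 hN hβ hp, if_pos rfl,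
    Complex.ofReal_re, Real.mul_self_sqrt (hp a)]

theorem sum_sq_mul_norm_sq_star_pilot_dotProduct_covariance_inv_mulVec
    (hv : ∀ s t, star (v s) ⬝ᵥ v t = if s = t then (N : ℂ) else 0)
    (hφ : ∀ i, φ i = (√(p i) : ℂ) • v (ψ i)) {σ2 : ℝ} {β : ι → ℝ} (hσ2 : 0 < σ2) (hN : 0 ≤ N)
    (hβ : ∀ i, 0 ≤ β i) (hp : ∀ i, 0 ≤ p i) (a : ι) :
    ∑ i, β i ^ 2 * ‖star (φ i) ⬝ᵥ ((covariance σ2 β φ)⁻¹ *ᵥ φ a)‖ ^ 2 =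
      p a * N ^ 2 / pilotEigenvalue σ2 N β p ψ (ψ a) ^ 2 *
        ∑ i, if ψ i = ψ a then β i ^ 2 * p i else 0 := by
  rw [Finset.mul_sum]
  refine Finset.sum_congr rfl fun i _ => ?_
  rw [star_pilot_dotProduct_covariance_inv_mulVec hv hφ hσ2 hN hβ hp, Complex.norm_real,
    Real.norm_eq_abs, sq_abs]
  split_ifs
  · rw [div_pow, mul_pow, mul_pow, Real.sq_sqrt (hp i), Real.sq_sqrt (hp a)]
    ring
  · simp

end OrthogonalPilots

end MassiveMIMO

open MassiveMIMO

theorem rate_large_antenna_limit_general (L K τ : ℕ) (hτ : 0 < τ)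
    (σ2 : ℝ) (hσ2 : 0 < σ2)
    (β : Fin L → Fin L → Fin K → ℝ) (hβ : ∀ l i j, 0 ≤ β l i j)
    (p : Fin L → Fin K → ℝ) (hp : ∀ l k, 0 < p l k)
    (v : Fin τ → (Fin τ → ℂ))
    (horth : ∀ s t, s ≠ t → star (v s) ⬝ᵥ (v t) = 0)
    (hnorm : ∀ s, star (v s) ⬝ᵥ (v s) = (τ : ℂ))
    (ψ : Fin L → Fin K → Fin τ)
    (φ : Fin L → Fin K → (Fin τ → ℂ))
    (hφ : ∀ i j, φ i j = ((Real.sqrt (p i j) : ℝ) : ℂ) • v (ψ i j))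
    (D : Fin L → Matrix (Fin τ) (Fin τ) ℂ)
    (hD : ∀ l s t, D l s t = (σ2 : ℂ) * (if s = t then 1 else 0) +
      ∑ i : Fin L, ∑ j : Fin K, (β l i j : ℂ) * (φ i j s) * conj (φ i j t))
    (l : Fin L) (k : Fin K)
    (I : ℝ)
    (hI_def : I = ∑ i : Fin L, ∑ j : Fin K,
      if (i, j) ≠ (l, k) ∧ ψ i j = ψ l k then (β l i j) ^ 2 * p i j else 0)
    (hI : 0 < I)
    (q : ℝ) (hq : q = (star (φ l k) ⬝ᵥ ((D l)⁻¹ *ᵥ (φ l k))).re)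
    (S : ℝ) (hS : S = (β l l k) ^ 2 * q ^ 2)
    (den : ℕ → ℝ)
    (hden : ∀ M : ℕ, den M =
      (1 / (M : ℝ)) * ((∑ i : Fin L, ∑ j : Fin K, β l i j) + σ2) * q +
        (∑ i : Fin L, ∑ j : Fin K,
          (β l i j) ^ 2 * ‖star (φ i j) ⬝ᵥ ((D l)⁻¹ *ᵥ (φ l k))‖ ^ 2) - S)
    (R : ℕ → ℝ)
    (hR : ∀ M : ℕ, R M = Real.logb 2 (1 + S / den M)) :
    Filter.Tendsto R Filter.atTop
      (nhds (Real.logb 2 (1 + (β l l k) ^ 2 * (p l k) / I))) := by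
  simp only [← Fintype.sum_prod_type', Prod.mk.eta] at hD hI_def hden
  have hv := star_dotProduct_eq_ite horth (c := ((τ : ℝ) : ℂ)) (by simpa using hnorm)
  have hβ' (x : Fin L × Fin K) : 0 ≤ β l x.1 x.2 := hβ l x.1 x.2
  have hp' (x : Fin L × Fin K) : 0 ≤ p x.1 x.2 := (hp x.1 x.2).le
  have hφ' (x : Fin L × Fin K) : φ x.1 x.2 = (√(p x.1 x.2) : ℂ) • v (ψ x.1 x.2) := hφ x.1 x.2
  have hDl : D l = covariance σ2 (fun x : Fin L × Fin K => β l x.1 x.2) (fun x => φ x.1 x.2) :=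
    Matrix.ext fun s t => by rw [hD, covariance_apply]
  rw [hDl, re_star_pilot_dotProduct_covariance_inv_mulVec_self hv hφ' hσ2 τ.cast_nonneg hβ' hp'
    (l, k)] at hq
  rw [hDl, sum_sq_mul_norm_sq_star_pilot_dotProduct_covariance_inv_mulVec hv hφ' hσ2
    τ.cast_nonneg hβ' hp' (l, k), ← sum_ite_ne_and_add (a := (l, k))
    (P := fun x => ψ x.1 x.2 = ψ l k) rfl, ← hI_def] at hden
  dsimp only at hq hden
  have hlam := pilotEigenvalue_pos (ψ := fun x : Fin L × Fin K => ψ x.1 x.2) hσ2 τ.cast_nonneg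
    hβ' hp' (ψ l k)
  set lam := pilotEigenvalue σ2 τ (fun x : Fin L × Fin K => β l x.1 x.2) (fun x => p x.1 x.2)
    (fun x => ψ x.1 x.2) (ψ l k)
  set G := p l k * τ ^ 2 / lam ^ 2
  have hG : 0 < G := div_pos (mul_pos (hp l k) (pow_pos (Nat.cast_pos.mpr hτ) 2)) (pow_pos hlam 2)
  have hS' : S = β l l k ^ 2 * p l k * G := by rw [hS, hq]; ring
  have hden' : den = fun M : ℕ => 1 / M * ((∑ x : Fin L × Fin K, β l x.1 x.2 + σ2) * q) + G * I :=
    funext fun M => by rw [hden, hS']; ring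
  have hratio : S / (G * I) = β l l k ^ 2 * p l k / I := by rw [hS']; field_simp
  have hlimit_pos : 0 < 1 + β l l k ^ 2 * p l k / I :=
    add_pos_of_pos_of_nonneg one_pos (div_nonneg (mul_nonneg (sq_nonneg _) (hp l k).le) hI.le)
  rw [funext hR, hden', ← hratio]
  exact tendsto_logb_one_add_div_one_div_mul_add 2 _ (mul_pos hG hI).ne' (hratio ▸ hlimit_pos.ne')

/-- Large-antenna limit of the achievable uplink rate under orthogonal pilots:
as the number of antennas `M → ∞`, the rate `R M = log₂(1 + S / den M)` of user
`(l,k)` tends to `log₂(1 + β_{llk}² p_{lk} / I)`, where `I` is the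
pilot-contamination interference from users sharing the pilot of `(l,k)`. -/
theorem rate_large_antenna_limit (L K τ : ℕ) (hL : 0 < L) (hK : 0 < K) (hτ : 0 < τ)
    (σ2 : ℝ) (hσ2 : 0 < σ2)
    (β : Fin L → Fin L → Fin K → ℝ) (hβ : ∀ l i j, 0 ≤ β l i j)
    (p : Fin L → Fin K → ℝ) (hp : ∀ l k, 0 < p l k)
    (v : Fin τ → (Fin τ → ℂ))
    (horth : ∀ s t, s ≠ t → star (v s) ⬝ᵥ (v t) = 0)
    (hnorm : ∀ s, star (v s) ⬝ᵥ (v s) = (τ : ℂ))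
    (ψ : Fin L → Fin K → Fin τ)
    (φ : Fin L → Fin K → (Fin τ → ℂ))
    (hφ : ∀ i j, φ i j = ((Real.sqrt (p i j) : ℝ) : ℂ) • v (ψ i j))
    (D : Fin L → Matrix (Fin τ) (Fin τ) ℂ)
    (hD : ∀ l s t, D l s t = (σ2 : ℂ) * (if s = t then 1 else 0) +
      ∑ i : Fin L, ∑ j : Fin K, (β l i j : ℂ) * (φ i j s) * conj (φ i j t))
    (l : Fin L) (k : Fin K)
    (I : ℝ)
    (hI_def : I = ∑ i : Fin L, ∑ j : Fin K,
      if (i, j) ≠ (l, k) ∧ ψ i j = ψ l k then (β l i j) ^ 2 * p i j else 0)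
    (hI : 0 < I)
    (q : ℝ) (hq : q = (star (φ l k) ⬝ᵥ ((D l)⁻¹ *ᵥ (φ l k))).re)
    (S : ℝ) (hS : S = (β l l k) ^ 2 * q ^ 2)
    (den : ℕ → ℝ)
    (hden : ∀ M : ℕ, den M =
      (1 / (M : ℝ)) * ((∑ i : Fin L, ∑ j : Fin K, β l i j) + σ2) * q +
        (∑ i : Fin L, ∑ j : Fin K,
          (β l i j) ^ 2 * ‖star (φ i j) ⬝ᵥ ((D l)⁻¹ *ᵥ (φ l k))‖ ^ 2) - S)
    (R : ℕ → ℝ)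
    (hR : ∀ M : ℕ, R M = Real.logb 2 (1 + S / den M)) :
    Filter.Tendsto R Filter.atTop
      (nhds (Real.logb 2 (1 + (β l l k) ^ 2 * (p l k) / I))) :=
  rate_large_antenna_limit_general L K τ hτ σ2 hσ2 β hβ p hp v horth hnorm ψ φ hφ D hD l k I hI_def
    hI q hq S hS den hden R hR
end
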